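/- Let K = F_q((T^{-1})), K_ℓ = K(T^{1/ℓ}), R = F_q[T], and R̃ = F_q[T^{1/ℓ}]. Let g ∈ SL(m+n, K_ℓ) be diagonal and let u be the block-unipotent matrix with identity diagonal blocks and upper-right block α ∈ M_{m×n}(K), entries in K. Then the first successive minimum of the discrete subgroup g u R^{m+n} ⊂ K_ℓ^{m+n} equals the first successive minimum of the lattice g u R̃^{m+n}: λ_1(g u R̃^{m+n}) = λ_1(g u R^{m+n}). -/
import Mathlib


set_option synthInstance.maxHeartbeats 1000000
set_option maxHeartbeats 1000000


open Classical in
noncomputable def absK {F : Type*} [Field F] (q : ℕ) (f : LaurentSeries F) : ℝ :=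
  if f = 0 then 0 else (q : ℝ) ^ (-f.order)

noncomputable def polyToK (F : Type*) [Field F] : Polynomial F →+* LaurentSeries F :=
  (Polynomial.aeval (HahnSeries.single (-1 : ℤ) (1 : F))).toRingHom

noncomputable def supN {K ι : Type*} [Fintype ι] (N : K → ℝ) (v : ι → K) : ℝ :=
  ⨆ i, N (v i)

noncomputable def succMin (L : Type*) [Field L] {V : Type*} [AddCommGroup V] [Module L V]
    (N : V → ℝ) (Λ : Set V) (i : ℕ) : ℝ :=
  sInf {r : ℝ | 0 < r ∧ ∃ v : Fin i → V, (∀ j, v j ∈ Λ) ∧ LinearIndependent L v ∧ ∀ j, N (v j) ≤ r}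

noncomputable def latticeOf {F : Type*} [Field F] {ι : Type*} [Fintype ι]
    (g : Matrix ι ι (LaurentSeries F)) : Set (ι → LaurentSeries F) :=
  {v | ∃ p : ι → Polynomial F, v = g.mulVec fun i => polyToK F (p i)}

noncomputable def dualLattice {F : Type*} [Field F] {ι : Type*} [Fintype ι]
    (Λ : Set (ι → LaurentSeries F)) : Set (ι → LaurentSeries F) :=
  {y | ∀ x ∈ Λ, ∃ p : Polynomial F, ∑ i, x i * y i = polyToK F p}

private lemma ultra_sum {L : Type*} [Field L] (N : L → ℝ)
    (hNmul : ∀ x y : L, N (x * y) = N x * N y)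
    (hN0 : ∀ x : L, N x = 0 ↔ x = 0)
    (hNadd : ∀ x y : L, N (x + y) ≤ max (N x) (N y))
    (hneg : ∀ x : L, N (-x) = N x)
    (hnn : ∀ x : L, 0 ≤ N x)
    (s : Finset ℕ) (t : ℕ → L)
    (hdist : ∀ k ∈ s, ∀ k' ∈ s, k ≠ k' → N (t k) = N (t k') → N (t k) = 0) :
    (∀ k ∈ s, N (t k) ≤ N (∑ j ∈ s, t j)) ∧
      (N (∑ j ∈ s, t j) = 0 ∨ ∃ k ∈ s, N (∑ j ∈ s, t j) = N (t k)) := by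
  have hzero : N (0 : L) = 0 := (hN0 0).mpr rfl
  have hmax : ∀ a b : L, N a ≠ N b → N (a + b) = max (N a) (N b) := by
    have key : ∀ a b : L, N a < N b → N (a + b) = N b := by
      intro a b hab
      have h1 : N (a + b) ≤ N b := (hNadd a b).trans (by rw [max_eq_right hab.le])
      have h2 : N b ≤ max (N (a + b)) (N a) := by
        have h3 := hNadd (a + b) (-a)
        rw [hneg] at h3
        rw [show a + b + -a = b from by ring] at h3
        exact h3
      rcases le_max_iff.mp h2 with h | h
      · exact le_antisymm h1 h
      · exact absurd h (not_le.mpr hab)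
    intro a b hab
    rcases lt_or_gt_of_ne hab with h | h
    · rw [key a b h, max_eq_right h.le]
    · rw [add_comm, key b a h, max_eq_left h.le]
  revert hdist
  induction s using Finset.cons_induction with
  | empty => intro _; simp [hzero]
  | cons a s ha ih =>
    intro hdist
    obtain ⟨ih1, ih2⟩ := ih (fun k hk k' hk' =>
      hdist k (Finset.mem_cons_of_mem hk) k' (Finset.mem_cons_of_mem hk'))
    rw [Finset.sum_cons]
    by_cases hab : N (t a) = N (∑ j ∈ s, t j)
    · rcases ih2 with h0 | ⟨k₁, hk₁, he⟩
      · have hb0 : (∑ j ∈ s, t j) = 0 := (hN0 _).mp h0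
        constructor
        · intro k hk
          rcases Finset.mem_cons.mp hk with rfl | hk
          · simp [hb0]
          · calc N (t k) ≤ N (∑ j ∈ s, t j) := ih1 k hk
              _ = 0 := h0
              _ ≤ N (t a + ∑ j ∈ s, t j) := by rw [hb0, add_zero]; exact hnn _
        · exact Or.inr ⟨a, Finset.mem_cons_self a s, by rw [hb0, add_zero]⟩
      · have hne : a ≠ k₁ := fun h => ha (h ▸ hk₁)
        have h0 : N (t a) = 0 := hdist a (Finset.mem_cons_self a s) k₁
          (Finset.mem_cons_of_mem hk₁) hne (hab.trans he)
        have hb0 : N (∑ j ∈ s, t j) = 0 := by rw [← hab]; exact h0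
        have hta : t a = 0 := (hN0 _).mp h0
        have hbz : (∑ j ∈ s, t j) = 0 := (hN0 _).mp hb0
        constructor
        · intro k hk
          rcases Finset.mem_cons.mp hk with rfl | hk
          · simp [hta, hbz, hzero]
          · have h4 := ih1 k hk
            rw [hbz, hzero] at h4
            simp [hta, hbz, hzero, h4]
        · exact Or.inl (by simp [hta, hbz, hzero])
    · have hm := hmax (t a) _ hab
      constructor
      · intro k hk
        rcases Finset.mem_cons.mp hk with rfl | hk
        · rw [hm]; exact le_max_left _ _
        · exact (ih1 k hk).trans (hm ▸ le_max_right _ _)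
      · rcases max_cases (N (t a)) (N (∑ j ∈ s, t j)) with ⟨hmx, _⟩ | ⟨hmx, _⟩
        · exact Or.inr ⟨a, Finset.mem_cons_self a s, by rw [hm, hmx]⟩
        · rcases ih2 with h0 | ⟨k₁, hk₁, he⟩
          · exact Or.inl (by rw [hm, hmx, h0])
          · exact Or.inr ⟨k₁, Finset.mem_cons_of_mem hk₁, by rw [hm, hmx, he]⟩

private lemma exists_decomp {F L : Type*} [CommSemiring F] [CommSemiring L]
    (φ : F →+* L) (u : L) (ℓ : ℕ) (hℓ : 0 < ℓ) (P : Polynomial F) :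
    ∃ Q : ℕ → Polynomial F,
      Polynomial.eval₂ φ u P
        = ∑ k ∈ Finset.range ℓ, u ^ k * Polynomial.eval₂ φ (u ^ ℓ) (Q k) := by
  induction P using Polynomial.induction_on' with
  | add p q hp hq =>
    obtain ⟨Qp, hQp⟩ := hp
    obtain ⟨Qq, hQq⟩ := hq
    refine ⟨fun k => Qp k + Qq k, ?_⟩
    simp [Polynomial.eval₂_add, hQp, hQq, mul_add, Finset.sum_add_distrib]
  | monomial d a =>
    refine ⟨fun k => if k = d % ℓ then Polynomial.monomial (d / ℓ) a else 0, ?_⟩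
    rw [Finset.sum_eq_single (d % ℓ)]
    · beta_reduce
      rw [if_pos rfl, Polynomial.eval₂_monomial, Polynomial.eval₂_monomial, ← pow_mul]
      conv_lhs => rw [show d = ℓ * (d / ℓ) + d % ℓ from (Nat.div_add_mod d ℓ).symm]
      rw [pow_add]; ring
    · intro k _ hne; beta_reduce; rw [if_neg hne]; simp
    · intro h; exact absurd (Finset.mem_range.mpr (Nat.mod_lt d hℓ)) h

/-- Comparison of first successive minima: with `K = F_q((T⁻¹))`, `K_ℓ = K(T^{1/ℓ})`
(a field `L` with `u = T^{1/ℓ}` and absolute value `NL` extending that of `K`),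
`R = F_q[T]`, `R̃ = F_q[T^{1/ℓ}]`, `g ∈ SL(m+n, K_ℓ)` diagonal, and `U` the
block-unipotent matrix with upper-right block `β` over `K`, the first minimum of the
discrete subgroup `gU·R^{m+n}` equals that of the lattice `gU·R̃^{m+n}`. -/
theorem first_minimum_R_eq_Rtilde {F : Type*} [Field F] [Fintype F] (q ℓ m n : ℕ)
    (hq : Fintype.card F = q) (hℓ : 1 ≤ ℓ)
    (L : Type*) [Field L] (ι : LaurentSeries F →+* L) (u : L) (NL : L → ℝ)
    (hu : u ^ ℓ = ι (HahnSeries.single (-1 : ℤ) 1))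
    (hNmul : ∀ x y : L, NL (x * y) = NL x * NL y)
    (hN0 : ∀ x : L, NL x = 0 ↔ x = 0)
    (hNadd : ∀ x y : L, NL (x + y) ≤ max (NL x) (NL y))
    (hNext : ∀ x : LaurentSeries F, NL (ι x) = absK q x)
    (hNu : NL u = (q : ℝ) ^ ((1 : ℝ) / ℓ))
    (dg : Fin m ⊕ Fin n → L) (hdet : (Matrix.diagonal dg).det = 1)
    (β : Matrix (Fin m) (Fin n) (LaurentSeries F)) :
    succMin L (supN NL)
        {x : Fin m ⊕ Fin n → L | ∃ v : Fin m ⊕ Fin n → L,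
          (∀ i, v i ∈ Set.range fun p : Polynomial F =>
            Polynomial.eval₂ (ι.comp (algebraMap F (LaurentSeries F))) u p) ∧
          x = (Matrix.diagonal dg *
              Matrix.fromBlocks 1 (β.map ι) 0 1).mulVec v} 1 =
      succMin L (supN NL)
        (Set.range fun p : Fin m ⊕ Fin n → Polynomial F =>
          (Matrix.diagonal dg *
              Matrix.fromBlocks 1 (β.map ι) 0 1).mulVec fun i => ι (polyToK F (p i))) 1 := by
  classical
  set φ : F →+* L := ι.comp (algebraMap F (LaurentSeries F)) with hφ
  set A : Matrix (Fin m ⊕ Fin n) (Fin m ⊕ Fin n) L :=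
    Matrix.diagonal dg * Matrix.fromBlocks 1 (β.map ι) 0 1 with hA
  have hq2 : (1 : ℝ) < q := by
    have h1 : 1 < Fintype.card F := Fintype.one_lt_card
    rw [hq] at h1; exact_mod_cast h1
  have hq0 : (0 : ℝ) < q := lt_trans one_pos hq2
  have hzero : NL 0 = 0 := (hN0 0).mpr rfl
  have hone : NL 1 = 1 := by
    have h := hNmul 1 1
    rw [one_mul] at h
    have h1 : NL 1 ≠ 0 := fun h0 => one_ne_zero ((hN0 1).mp h0)
    have h2 : NL 1 * 1 = NL 1 * NL 1 := by rw [mul_one]; exact h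
    exact (mul_left_cancel₀ h1 h2).symm
  have habsnn : ∀ f : LaurentSeries F, 0 ≤ absK q f := by
    intro f
    unfold absK
    split
    · exact le_refl 0
    · exact zpow_nonneg hq0.le _
  have hneg : ∀ x : L, NL (-x) = NL x := by
    intro x
    have hm1 : NL (-1 : L) = 1 := by
      have e : ((-1 : L)) = ι (-1) := by rw [map_neg, map_one]
      rw [e, hNext]
      unfold absK
      rw [if_neg (neg_ne_zero.mpr one_ne_zero), HahnSeries.order_neg, HahnSeries.order_one,
        neg_zero, zpow_zero]
    calc NL (-x) = NL ((-1) * x) := by rw [neg_one_mul]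
      _ = NL (-1) * NL x := hNmul _ _
      _ = NL x := by rw [hm1, one_mul]
  have hnn : ∀ x : L, 0 ≤ NL x := by
    intro x
    by_contra hc
    push_neg at hc
    have h := hNadd x (-x)
    rw [add_neg_cancel, hzero, hneg, max_self] at h
    linarith
  have hNpow : ∀ (x : L) (k : ℕ), NL (x ^ k) = NL x ^ k := by
    intro x k
    induction k with
    | zero => simpa using hone
    | succ k ih => rw [pow_succ, hNmul, ih, pow_succ]
  have hNu1 : (1 : ℝ) ≤ NL u := by
    rw [hNu]
    exact Real.one_le_rpow hq2.le (by positivity)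
  have hevalpow : ∀ p : Polynomial F, ι (polyToK F p) = Polynomial.eval₂ φ (u ^ ℓ) p := by
    intro p
    show ι (Polynomial.aeval (HahnSeries.single (-1 : ℤ) (1 : F)) p) = _
    rw [Polynomial.aeval_def, Polynomial.hom_eval₂, ← hu, hφ]
  unfold succMin
  congr 1
  ext r
  simp only [Set.mem_setOf_eq]
  constructor
  · rintro ⟨hr, v, hmem, hli, hb⟩
    refine ⟨hr, ?_⟩
    set U0 : Matrix (Fin m ⊕ Fin n) (Fin m ⊕ Fin n) (LaurentSeries F) :=
      Matrix.fromBlocks 1 β 0 1 with hU0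
    have hUmap : (Matrix.fromBlocks (1 : Matrix (Fin m) (Fin m) L) (β.map ι) 0
        (1 : Matrix (Fin n) (Fin n) L)) = U0.map ι := by
      rw [hU0, Matrix.fromBlocks_map]
      rw [Matrix.map_one ι (map_zero ι) (map_one ι), Matrix.map_one ι (map_zero ι) (map_one ι),
        Matrix.map_zero ι (map_zero ι)]
    set x := v 0 with hx
    have hx0 : x ≠ 0 := hli.ne_zero 0
    have hxb : supN NL x ≤ r := hb 0
    obtain ⟨w, hw, hxw⟩ := hmem 0
    choose P hP using hw
    have hdec := fun i => exists_decomp φ u ℓ (Nat.lt_of_lt_of_le Nat.zero_lt_one hℓ) (P i)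
    choose Q hQ using hdec
    set y : ℕ → (Fin m ⊕ Fin n → L) :=
      fun k => A.mulVec (fun i => ι (polyToK F (Q i k))) with hy
    have hxsum : x = ∑ k ∈ Finset.range ℓ, u ^ k • y k := by
      rw [hx, hxw]
      have hwsum : w = ∑ k ∈ Finset.range ℓ,
          u ^ k • (fun i => ι (polyToK F (Q i k))) := by
        funext i
        calc w i = Polynomial.eval₂ φ u (P i) := (hP i).symm
          _ = ∑ k ∈ Finset.range ℓ, u ^ k * Polynomial.eval₂ φ (u ^ ℓ) (Q i k) := hQ i
          _ = ∑ k ∈ Finset.range ℓ, u ^ k * ι (polyToK F (Q i k)) := by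
              refine Finset.sum_congr rfl fun k _ => ?_
              rw [hevalpow]
          _ = (∑ k ∈ Finset.range ℓ, u ^ k • fun i => ι (polyToK F (Q i k))) i := by
              rw [Finset.sum_apply]
              rfl
      rw [hwsum, ← Matrix.mulVecLin_apply, map_sum]
      refine Finset.sum_congr rfl fun k _ => ?_
      rw [LinearMap.map_smul, Matrix.mulVecLin_apply]
    have hex : ∃ k₀ ∈ Finset.range ℓ, y k₀ ≠ 0 := by
      by_contra hc
      push_neg at hc
      apply hx0
      rw [hxsum]
      exact Finset.sum_eq_zero fun k hk => by rw [hc k hk, smul_zero]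
    obtain ⟨k₀, hk₀, hy0⟩ := hex
    have hyc : ∀ k i, y k i = dg i * ι ((U0.mulVec fun j => polyToK F (Q j k)) i) := by
      intro k i
      show (A.mulVec _) i = _
      rw [hA, hUmap, ← Matrix.mulVec_mulVec, Matrix.mulVec_diagonal]
      congr 1
      show ((U0.map ι).mulVec fun j => ι (polyToK F (Q j k))) i
        = ι ((U0.mulVec fun j => polyToK F (Q j k)) i)
      simp only [Matrix.mulVec, dotProduct, Matrix.map_apply, map_sum, map_mul]
    have hcomp : ∀ i, NL (y k₀ i) ≤ NL (x i) := by
      intro i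
      set c : ℕ → LaurentSeries F :=
        fun k => (U0.mulVec fun j => polyToK F (Q j k)) i with hc
      have hxi : x i = dg i * ∑ k ∈ Finset.range ℓ, u ^ k * ι (c k) := by
        rw [hxsum, Finset.sum_apply, Finset.mul_sum]
        refine Finset.sum_congr rfl fun k _ => ?_
        rw [Pi.smul_apply, smul_eq_mul, hyc k i]
        ring
      have hdist : ∀ k ∈ Finset.range ℓ, ∀ k' ∈ Finset.range ℓ, k ≠ k' →
          NL (u ^ k * ι (c k)) = NL (u ^ k' * ι (c k')) → NL (u ^ k * ι (c k)) = 0 := by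
        intro k hk k' hk' hne heq
        by_cases hz : c k = 0
        · rw [hz, map_zero, mul_zero, hzero]
        by_cases hz' : c k' = 0
        · rw [heq, hz', map_zero, mul_zero, hzero]
        exfalso
        rw [hNmul, hNmul, hNpow, hNpow, hNext, hNext, hNu] at heq
        unfold absK at heq
        rw [if_neg hz, if_neg hz'] at heq
        set o := (c k).order with ho
        set o' := (c k').order with ho'
        have key : ∀ (a : ℕ) (b : ℤ), ((q : ℝ) ^ ((1 : ℝ) / ℓ)) ^ a * (q : ℝ) ^ (-b)
            = (q : ℝ) ^ ((a : ℝ) / (ℓ : ℝ) + (-b : ℤ)) := by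
          intro a b
          rw [← Real.rpow_natCast ((q : ℝ) ^ ((1 : ℝ) / ℓ)) a, ← Real.rpow_mul hq0.le,
            show (q : ℝ) ^ (-b) = (q : ℝ) ^ ((-b : ℤ) : ℝ) from (Real.rpow_intCast _ _).symm,
            ← Real.rpow_add hq0]
          congr 1
          push_cast
          ring
        rw [key, key] at heq
        have hexp : (k : ℝ) / (ℓ : ℝ) + ((-o : ℤ) : ℝ)
            = (k' : ℝ) / (ℓ : ℝ) + ((-o' : ℤ) : ℝ) := by
          have h1 := (Real.rpow_le_rpow_left_iff hq2).mp heq.le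
          have h2 := (Real.rpow_le_rpow_left_iff hq2).mp heq.ge
          linarith
        have hl0 : (ℓ : ℝ) ≠ 0 := by
          have : 0 < ℓ := Nat.lt_of_lt_of_le Nat.zero_lt_one hℓ
          positivity
        have hZ : (k : ℝ) - (ℓ : ℝ) * (o : ℝ) = (k' : ℝ) - (ℓ : ℝ) * (o' : ℝ) := by
          field_simp at hexp
          push_cast at hexp ⊢
          linarith
        have hZ' : (k : ℤ) - (ℓ : ℤ) * o = (k' : ℤ) - (ℓ : ℤ) * o' := by
          exact_mod_cast hZ
        have hdvd : (ℓ : ℤ) ∣ ((k : ℤ) - (k' : ℤ)) := ⟨o - o', by linear_combination hZ'⟩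
        have hkl := Finset.mem_range.mp hk
        have hkl' := Finset.mem_range.mp hk'
        have habs : |(k : ℤ) - (k' : ℤ)| < (ℓ : ℤ) := abs_lt.mpr (by constructor <;> omega)
        have h0 := Int.eq_zero_of_abs_lt_dvd hdvd habs
        omega
      have hkey := (ultra_sum NL hNmul hN0 hNadd hneg hnn (Finset.range ℓ)
        (fun k => u ^ k * ι (c k)) hdist).1 k₀ hk₀
      have h1 : NL (u ^ k₀ * ι (c k₀)) = NL u ^ k₀ * absK q (c k₀) := by
        rw [hNmul, hNpow, hNext]
      have h2 : absK q (c k₀) ≤ NL (∑ k ∈ Finset.range ℓ, u ^ k * ι (c k)) := by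
        refine le_trans ?_ hkey
        rw [h1]
        exact le_mul_of_one_le_left (habsnn _) (one_le_pow₀ hNu1)
      calc NL (y k₀ i) = NL (dg i) * absK q (c k₀) := by rw [hyc k₀ i, hNmul, hNext]
        _ ≤ NL (dg i) * NL (∑ k ∈ Finset.range ℓ, u ^ k * ι (c k)) :=
            mul_le_mul_of_nonneg_left h2 (hnn _)
        _ = NL (x i) := by rw [hxi, hNmul]
    refine ⟨fun _ => y k₀, ?_, ?_, ?_⟩
    · intro j
      exact ⟨fun i => Q i k₀, rfl⟩
    · rw [linearIndependent_unique_iff]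
      exact hy0
    · intro j
      have hsup : supN NL (y k₀) ≤ supN NL x := by
        unfold supN
        cases isEmpty_or_nonempty (Fin m ⊕ Fin n) with
        | inl h => rw [Real.iSup_of_isEmpty, Real.iSup_of_isEmpty]
        | inr h => exact ciSup_mono (Set.Finite.bddAbove (Set.finite_range _)) hcomp
      exact hsup.trans hxb
  · rintro ⟨hr, v, hmem, hli, hb⟩
    refine ⟨hr, v, ?_, hli, hb⟩
    intro j
    obtain ⟨p, hp⟩ := hmem j
    refine ⟨fun i => ι (polyToK F (p i)), ?_, hp.symm⟩
    intro i
    refine ⟨(p i).comp (Polynomial.X ^ ℓ), ?_⟩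
    show Polynomial.eval₂ φ u ((p i).comp (Polynomial.X ^ ℓ)) = _
    rw [Polynomial.eval₂_comp, Polynomial.eval₂_X_pow]
    exact (hevalpow _).symm
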